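/- arXiv:2407.08753 — 5 statements merged into one kernel-verified Lean document; each statement's English description precedes it below -/
import Mathlib

section
/- Let Λ ⊂ ℝ² be a unimodular lattice and suppose A, B ∈ Λ are nonzero points lying in different open quadrants such that the open rectangle (-max(|x_A|,|x_B|), max(|x_A|,|x_B|)) × (-max(|y_A|,|y_B|), max(|y_A|,|y_B|)) contains no nonzero lattice points; assume |x_A| > |x_B| and 0 < y_A < y_B. Then |det(A;B)| = 1, i.e., {A, B} is a basis of Λ. -/
/-!
The half-open parallelogram `{s • A + t • B | 0 ≤ s, t < 1}` contains no nonzero lattice point: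
a lattice point `p = s • A + t • B` in it lies in the empty rectangle when its height is below
`y_B`, and otherwise `A + B - p` does. Hence every lattice point has integer coordinates in
`A, B`, so `A, B` and `u, v` are bases of the same lattice and their determinants agree up to sign.
-/

/-- The lattice `ℤu + ℤv ⊂ ℝ²`. -/
def lat (u v : ℝ × ℝ) : Set (ℝ × ℝ) := {p | ∃ m n : ℤ, p = m • u + n • v}

def det2 (p q : ℝ × ℝ) : ℝ := p.1 * q.2 - p.2 * q.1

lemma lat_eq_span (u v : ℝ × ℝ) : lat u v = Submodule.span ℤ {u, v} := by
  ext p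
  simp only [lat, Set.mem_ofPred_eq, SetLike.mem_coe, Submodule.mem_span_pair, eq_comm]

lemma left_mem_lat (u v : ℝ × ℝ) : u ∈ lat u v := ⟨1, 0, by simp⟩

lemma right_mem_lat (u v : ℝ × ℝ) : v ∈ lat u v := ⟨0, 1, by simp⟩

lemma det2_smul_add_smul (a b c d : ℝ) (A B : ℝ × ℝ) :
    det2 (a • A + b • B) (c • A + d • B) = (a * d - b * c) * det2 A B := by
  simp only [det2, Prod.fst_add, Prod.snd_add, Prod.smul_fst, Prod.smul_snd, smul_eq_mul]
  ring

lemma exists_det2_eq_int_mul {u v p q : ℝ × ℝ} (hp : p ∈ lat u v) (hq : q ∈ lat u v) :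
    ∃ D : ℤ, det2 p q = D * det2 u v := by
  obtain ⟨a, b, rfl⟩ := hp
  obtain ⟨c, d, rfl⟩ := hq
  refine ⟨a * d - b * c, ?_⟩
  simp only [← Int.cast_smul_eq_zsmul ℝ, det2_smul_add_smul]
  push_cast
  rfl

lemma smul_add_smul_eq_zero {A B : ℝ × ℝ} (hAB : det2 A B ≠ 0) {s t : ℝ}
    (h : s • A + t • B = 0) : s = 0 ∧ t = 0 := by
  have h1 : s * A.1 + t * B.1 = 0 := congrArg Prod.fst h
  have h2 : s * A.2 + t * B.2 = 0 := congrArg Prod.snd h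
  unfold det2 at hAB
  constructor
  · exact (mul_eq_zero.mp (by linear_combination B.2 * h1 - B.1 * h2 :
      s * (A.1 * B.2 - A.2 * B.1) = 0)).resolve_right hAB
  · exact (mul_eq_zero.mp (by linear_combination A.1 * h2 - A.2 * h1 :
      t * (A.1 * B.2 - A.2 * B.1) = 0)).resolve_right hAB

lemma det2_smul_eq (A B p : ℝ × ℝ) : det2 A B • p = det2 p B • A + det2 A p • B := by
  ext <;> simp only [det2, Prod.fst_add, Prod.snd_add, Prod.smul_fst, Prod.smul_snd,
    smul_eq_mul] <;> ring

lemma eq_smul_add_smul_of_det2_ne_zero {A B : ℝ × ℝ} (hAB : det2 A B ≠ 0) (p : ℝ × ℝ) :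
    p = (det2 p B / det2 A B) • A + (det2 A p / det2 A B) • B := by
  rw [div_eq_inv_mul, div_eq_inv_mul, mul_smul, mul_smul, ← smul_add, ← det2_smul_eq,
    inv_smul_smul₀ hAB]

lemma lat_subset_lat_of_parallelogram {u v A B : ℝ × ℝ} (hA : A ∈ lat u v) (hB : B ∈ lat u v)
    (hAB : det2 A B ≠ 0)
    (hempty : ∀ s t : ℝ, 0 ≤ s → s < 1 → 0 ≤ t → t < 1 → s • A + t • B ∈ lat u v →
      s = 0 ∧ t = 0) :
    lat u v ⊆ lat A B := by
  intro p hp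
  have hp_eq := eq_smul_add_smul_of_det2_ne_zero hAB p
  set s := det2 p B / det2 A B
  set t := det2 A p / det2 A B
  have hfract : Int.fract s • A + Int.fract t • B = p - ⌊s⌋ • A - ⌊t⌋ • B := by
    conv_rhs => rw [hp_eq]
    simp only [Int.fract, sub_smul, ← Int.cast_smul_eq_zsmul ℝ]
    abel
  rw [lat_eq_span] at hp hA hB ⊢
  obtain ⟨hs, ht⟩ := hempty _ _ (Int.fract_nonneg s) (Int.fract_lt_one s)
    (Int.fract_nonneg t) (Int.fract_lt_one t) <| by
      rw [lat_eq_span, hfract]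
      exact sub_mem (sub_mem hp (zsmul_mem hA _)) (zsmul_mem hB _)
  rw [hp_eq, ← Int.floor_add_fract s, ← Int.floor_add_fract t, hs, ht, add_zero, add_zero,
    Int.cast_smul_eq_zsmul, Int.cast_smul_eq_zsmul]
  exact Submodule.mem_span_pair.mpr ⟨_, _, rfl⟩

lemma abs_det2_eq_of_mem_lat {u v A B : ℝ × ℝ} (hA : A ∈ lat u v) (hB : B ∈ lat u v)
    (hu : u ∈ lat A B) (hv : v ∈ lat A B) (hAB : det2 A B ≠ 0) :
    |det2 A B| = |det2 u v| := by
  obtain ⟨D, hD⟩ := exists_det2_eq_int_mul hA hB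
  obtain ⟨E, hE⟩ := exists_det2_eq_int_mul hu hv
  have hDE : D * E = 1 := by
    have : ((D * E : ℤ) : ℝ) * det2 A B = 1 * det2 A B := by
      push_cast
      rw [one_mul, mul_assoc, ← hE, ← hD]
    exact_mod_cast mul_right_cancel₀ hAB this
  rcases Int.eq_one_or_neg_one_of_mul_eq_one hDE with h | h <;> simp [hD, h]

lemma abs_smul_add_smul_lt {a b s t : ℝ} (hab : a * b < 0) (hba : |b| < |a|)
    (hs0 : 0 ≤ s) (hs1 : s < 1) (ht0 : 0 ≤ t) (ht1 : t ≤ 1) :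
    |s * a + t * b| < |a| := by
  rcases lt_or_gt_of_ne (left_ne_zero_of_mul hab.ne) with ha | ha
  · have hb : 0 < b := pos_of_mul_neg_right hab ha.le
    rw [abs_of_neg ha, abs_of_pos hb] at hba
    rw [abs_of_neg ha, abs_lt]
    constructor <;> nlinarith
  · have hb : b < 0 := neg_of_mul_neg_right hab ha.le
    rw [abs_of_pos ha, abs_of_neg hb] at hba
    rw [abs_of_pos ha, abs_lt]
    constructor <;> nlinarith

lemma det2_ne_zero_of_opposite_quadrants {A B : ℝ × ℝ} (hquad : A.1 * B.1 < 0)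
    (hyA : 0 < A.2) (hyB : 0 < B.2) : det2 A B ≠ 0 := by
  intro h
  have hcross : A.1 * B.2 = A.2 * B.1 := sub_eq_zero.mp h
  have hsq : A.1 * B.1 * (A.2 * B.2) = (A.1 * B.2) ^ 2 := by
    linear_combination (A.1 * B.2) * hcross.symm
  nlinarith [mul_neg_of_neg_of_pos hquad (mul_pos hyA hyB), sq_nonneg (A.1 * B.2)]

lemma parallelogram_free_of_rectangle_free {u v A B : ℝ × ℝ}
    (hA : A ∈ lat u v) (hB : B ∈ lat u v) (hquad : A.1 * B.1 < 0)
    (hx : |B.1| < |A.1|) (hyA : 0 < A.2) (hyAB : A.2 < B.2)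
    (hpiv : ∀ p ∈ lat u v, |p.1| < |A.1| → |p.2| < B.2 → p = 0)
    (s t : ℝ) (hs0 : 0 ≤ s) (hs1 : s < 1) (ht0 : 0 ≤ t) (ht1 : t < 1)
    (hp : s • A + t • B ∈ lat u v) : s = 0 ∧ t = 0 := by
  have hAB := det2_ne_zero_of_opposite_quadrants hquad hyA (hyA.trans hyAB)
  by_cases hlow : s * A.2 + t * B.2 < B.2
  · refine smul_add_smul_eq_zero hAB (hpiv _ hp ?_ ?_)
    · exact abs_smul_add_smul_lt hquad hx hs0 hs1 ht0 ht1.le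
    · show |s * A.2 + t * B.2| < B.2
      have hpos : 0 ≤ s * A.2 + t * B.2 :=
        add_nonneg (mul_nonneg hs0 hyA.le) (mul_nonneg ht0 (hyA.trans hyAB).le)
      rwa [abs_of_nonneg hpos]
  · have hs : 0 < s := by nlinarith
    have hq_eq : (1 - s) • A + (1 - t) • B = A + B - (s • A + t • B) := by
      simp only [sub_smul, one_smul]; abel
    have hq_mem : (1 - s) • A + (1 - t) • B ∈ lat u v := by
      rw [hq_eq]
      rw [lat_eq_span] at hA hB hp ⊢
      exact sub_mem (add_mem hA hB) hp
    have hq_y : |(1 - s) * A.2 + (1 - t) * B.2| < B.2 := by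
      rw [abs_lt]
      constructor <;> nlinarith
    have hq_x : |(1 - s) * A.1 + (1 - t) * B.1| < |A.1| :=
      abs_smul_add_smul_lt hquad hx (by linarith) (by linarith) (by linarith) (by linarith)
    have hq_zero := smul_add_smul_eq_zero hAB (hpiv _ hq_mem hq_x hq_y)
    linarith [hq_zero.1]

theorem consecutive_pivots_basis_general (u v A B : ℝ × ℝ)
    (huv : |u.1 * v.2 - u.2 * v.1| = 1)
    (hA : A ∈ lat u v) (hB : B ∈ lat u v)
    (hquad : A.1 * B.1 < 0)
    (hx : |B.1| < |A.1|) (hyA : 0 < A.2) (hyAB : A.2 < B.2)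
    (hpiv : ∀ p ∈ lat u v, |p.1| < |A.1| → |p.2| < B.2 → p = 0) :
    |A.1 * B.2 - A.2 * B.1| = 1 := by
  have hAB := det2_ne_zero_of_opposite_quadrants hquad hyA (hyA.trans hyAB)
  have hsub := lat_subset_lat_of_parallelogram hA hB hAB
    (parallelogram_free_of_rectangle_free hA hB hquad hx hyA hyAB hpiv)
  exact (abs_det2_eq_of_mem_lat hA hB (hsub (left_mem_lat u v)) (hsub (right_mem_lat u v))
    hAB).trans huv

/-- Two consecutive pivots `A, B` (in different open quadrants, with
`|x_A| > |x_B|`, `0 < y_A < y_B`, and no nonzero lattice point in the open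
rectangle `(-|x_A|, |x_A|) × (-y_B, y_B)`) of a unimodular lattice form a basis:
`|det(A;B)| = 1`. -/
theorem consecutive_pivots_basis (u v A B : ℝ × ℝ)
    (huv : |u.1 * v.2 - u.2 * v.1| = 1)
    (hA : A ∈ lat u v) (hB : B ∈ lat u v)
    (hA0 : A ≠ 0) (hB0 : B ≠ 0)
    (hquad : A.1 * B.1 < 0)
    (hx : |B.1| < |A.1|) (hyA : 0 < A.2) (hyAB : A.2 < B.2)
    (hpiv : ∀ p ∈ lat u v, |p.1| < |A.1| → |p.2| < B.2 → p = 0) :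
    |A.1 * B.2 - A.2 * B.1| = 1 :=
  consecutive_pivots_basis_general u v A B huv hA hB hquad hx hyA hyAB hpiv
end

section
/- Let F_n denote the Fibonacci numbers (F₀ = 0, F₁ = 1, F_{n+1} = F_n + F_{n-1}), and for t ≥ 1 let x_t be the unique positive root of F_{2t+1}x² - 2F_{2t}x - F_{2t} = 0 (equivalently x_t = [1; \overline{1^{(t-1)}, 2, 1}]). Then x_t/(x_t + 1) = √(F_{2t}/F_{2t+2}). -/
/-- Let `F` be the Fibonacci numbers and, for `t ≥ 1`, let `x_t` be the unique
positive root of `F_{2t+1} x² - 2 F_{2t} x - F_{2t} = 0`. Then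
`x_t / (x_t + 1) = √(F_{2t} / F_{2t+2})`. -/
theorem fib_root_ratio (t : ℕ) (ht : 1 ≤ t) (x : ℝ) (hx : 0 < x)
    (hroot : (Nat.fib (2 * t + 1) : ℝ) * x ^ 2 - 2 * (Nat.fib (2 * t) : ℝ) * x -
      (Nat.fib (2 * t) : ℝ) = 0) :
    x / (x + 1) = Real.sqrt ((Nat.fib (2 * t) : ℝ) / (Nat.fib (2 * t + 2) : ℝ)) := by
  have hfib : (Nat.fib (2 * t + 2) : ℝ) = Nat.fib (2 * t + 1) + Nat.fib (2 * t) := by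
    rw [Nat.fib_add_two]; push_cast; ring
  have hpos : (0:ℝ) < Nat.fib (2 * t + 2) := by
    exact_mod_cast Nat.fib_pos.mpr (by omega)
  have hx1 : (0:ℝ) < x + 1 := by linarith
  have key : (Nat.fib (2 * t) : ℝ) / (Nat.fib (2 * t + 2) : ℝ) = (x / (x + 1)) ^ 2 := by
    rw [hfib]
    have h0 : (Nat.fib (2 * t + 1) : ℝ) + Nat.fib (2 * t) ≠ 0 := by
      rw [← hfib]; positivity
    field_simp
    nlinarith [hroot]
  rw [key, Real.sqrt_sq (by positivity)]
end

section
/- Let a₋₁, a₀ ≥ 5 be integers and suppose a_t ≤ 4 for all other indices t of a bi-infinite positive integer sequence {a_n}. Then the product β₀α₋₁ = [0; a₀, a₁, ...]·[0; a₋₁, a₋₂, ...] is the infimum over all j ∈ ℤ of β_jα_{j-1}, where β_j = [0; a_{j-1}, a_{j-2}, ...] and α_{j-1} = [0; a_j, a_{j+1}, ...]. In particular, for the adjacent offsets one has 5(a₀ + 1/a₋₁) < (a₀ + 1/5)(a₋₁ + 1/5) whenever a₀, a₋₁ ≥ 5. -/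
open Filter

/-- Value of a finite continued fraction `[0; h₁, h₂, ...]` given as a list of reals. -/
noncomputable def cfVal : List ℝ → ℝ
  | [] => 0
  | h :: t => 1 / (h + cfVal t)

open Topology

/-!
Since `β_j α_{j-1} = 1 / ((a_{j-1} + β_{j-1}) (a_j + α_j))`, the claim is that the middle
denominator `D_0` is the largest. Tails lie in `(0, 1)`, so `D_0 > 5 · 5` while `D_j < 5 · 5`
whenever `a_{j-1}, a_j ≤ 4`. At the neighbours `j = ±1`, substituting `β_0 = 1 / (a_{-1} + β_{-1})`
and `α_0 = 1 / (a_1 + α_1)` (resp. their mirror images) reduces `D_{±1} < D_0` to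
`(x + 1/u) s < (x + 1/s) u` for `0 ≤ x` and `0 < s < u`.
-/

theorem cfVal_nonneg {l : List ℝ} (hl : ∀ x ∈ l, 0 ≤ x) : 0 ≤ cfVal l := by
  induction l with
  | nil => simp [cfVal]
  | cons h t ih =>
    have hh := hl h List.mem_cons_self
    have ht := ih fun x hx => hl x (List.mem_cons_of_mem _ hx)
    rw [cfVal]
    positivity

theorem cfVal_range_succ_map (f : ℕ → ℝ) (n : ℕ) :
    cfVal ((List.range (n + 1)).map f) =
      1 / (f 0 + cfVal ((List.range n).map fun i => f (i + 1))) := by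
  rw [List.range_succ_eq_map, List.map_cons, List.map_map, cfVal]
  rfl

theorem nonneg_of_tendsto_cfVal {f : ℕ → ℝ} {x : ℝ} (hf : ∀ i, 0 ≤ f i)
    (hx : Tendsto (fun n => cfVal ((List.range n).map f)) atTop (𝓝 x)) : 0 ≤ x :=
  ge_of_tendsto' hx fun _ => cfVal_nonneg <| by simpa using fun i _ => hf i

theorem eq_one_div_of_tendsto_cfVal {f : ℕ → ℝ} {x y : ℝ}
    (hx : Tendsto (fun n => cfVal ((List.range n).map f)) atTop (𝓝 x))
    (hy : Tendsto (fun n => cfVal ((List.range n).map fun i => f (i + 1))) atTop (𝓝 y))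
    (hne : f 0 + y ≠ 0) : x = 1 / (f 0 + y) := by
  refine tendsto_nhds_unique ((hx.comp (tendsto_add_atTop_nat 1)).congr fun n => ?_)
    (tendsto_const_nhds.div (tendsto_const_nhds.add hy) hne)
  exact cfVal_range_succ_map f n

/-- `γ j = [0; a (j + s), a (j + 2s), …]`: `s = 1` gives the paper's `α_j`, `s = -1` its `β_j`. -/
def IsTailCF (a : ℤ → ℝ) (s : ℤ) (γ : ℤ → ℝ) : Prop :=
  ∀ j, Tendsto (fun n => cfVal ((List.range n).map fun i : ℕ => a (j + s * ((i : ℤ) + 1))))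
    atTop (𝓝 (γ j))

namespace IsTailCF

variable {a : ℤ → ℝ} {s : ℤ} {γ : ℤ → ℝ}

theorem nonneg (h : IsTailCF a s γ) (ha : ∀ t, 0 ≤ a t) (j : ℤ) : 0 ≤ γ j :=
  nonneg_of_tendsto_cfVal (fun _ => ha _) (h j)

theorem eq_one_div (h : IsTailCF a s γ) (ha : ∀ t, 0 < a t) (j : ℤ) :
    γ j = 1 / (a (j + s) + γ (j + s)) := by
  have hshift : Tendsto (fun n => cfVal ((List.range n).map fun i =>
      a (j + s * ((i + 1 : ℕ) + 1)))) atTop (𝓝 (γ (j + s))) := by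
    convert h (j + s) using 6
    push_cast
    ring
  have hne : a (j + s) + γ (j + s) ≠ 0 :=
    (add_pos_of_pos_of_nonneg (ha _) (h.nonneg (fun t => (ha t).le) _)).ne'
  simpa using eq_one_div_of_tendsto_cfVal (h j) hshift (by simpa using hne)

theorem pos (h : IsTailCF a s γ) (ha : ∀ t, 0 < a t) (j : ℤ) : 0 < γ j := by
  rw [h.eq_one_div ha]
  have := ha (j + s)
  have := h.nonneg (fun t => (ha t).le) (j + s)
  positivity

theorem lt_one (h : IsTailCF a s γ) (ha : ∀ t, 1 ≤ a t) (j : ℤ) : γ j < 1 := by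
  have ha' : ∀ t, 0 < a t := fun t => one_pos.trans_le (ha t)
  have hpos := h.pos ha' (j + s)
  rw [h.eq_one_div ha', div_lt_one (by linarith [ha (j + s)])]
  linarith [ha (j + s)]

end IsTailCF

theorem add_one_div_mul_lt_add_one_div_mul {x s u : ℝ} (hx : 0 ≤ x) (hs : 0 < s) (hsu : s < u) :
    (x + 1 / u) * s < (x + 1 / s) * u := by
  have hu : 0 < u := hs.trans hsu
  have hdiv : s / u < u / s := by
    rw [div_lt_div_iff₀ hu hs]
    nlinarith
  calc (x + 1 / u) * s = x * s + s / u := by ring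
    _ < x * u + u / s := add_lt_add_of_le_of_lt (mul_le_mul_of_nonneg_left hsu.le hx) hdiv
    _ = (x + 1 / s) * u := by ring

theorem denom_le_middle {a α β : ℤ → ℝ} (ha : ∀ t, 1 ≤ a t) (h0 : 5 ≤ a 0) (h1 : 5 ≤ a (-1))
    (hsmall : ∀ t, t ≠ 0 → t ≠ -1 → a t ≤ 4) (hα : IsTailCF a 1 α) (hβ : IsTailCF a (-1) β)
    (j : ℤ) : (a (j - 1) + β (j - 1)) * (a j + α j) ≤ (a (-1) + β (-1)) * (a 0 + α 0) := by
  have ha' : ∀ t, 0 < a t := fun t => one_pos.trans_le (ha t)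
  have hα_pos : ∀ t, 0 < a t + α t := fun t => add_pos (ha' t) (hα.pos ha' t)
  have hβ_pos : ∀ t, 0 < a t + β t := fun t => add_pos (ha' t) (hβ.pos ha' t)
  have hbig_α : 5 < a 0 + α 0 := by linarith [hα.pos ha' 0]
  have hbig_β : 5 < a (-1) + β (-1) := by linarith [hβ.pos ha' (-1)]
  have hsmall_α : ∀ t, t ≠ 0 → t ≠ -1 → a t + α t < 5 := fun t h0 h1 => by
    linarith [hsmall t h0 h1, hα.lt_one ha t]
  have hsmall_β : ∀ t, t ≠ 0 → t ≠ -1 → a t + β t < 5 := fun t h0 h1 => by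
    linarith [hsmall t h0 h1, hβ.lt_one ha t]
  obtain rfl | rfl | rfl | ⟨hj1, hj0, hjm1⟩ :
      j = 0 ∨ j = 1 ∨ j = -1 ∨ (j ≠ 1 ∧ j ≠ 0 ∧ j ≠ -1) := by omega
  · exact le_rfl
  · have hα0 : α 0 = 1 / (a 1 + α 1) := hα.eq_one_div ha' 0
    have hβ0 : β 0 = 1 / (a (-1) + β (-1)) := hβ.eq_one_div ha' 0
    have hα1 : a 1 + α 1 < 5 := hsmall_α 1 (by norm_num) (by norm_num)
    calc (a (1 - 1) + β (1 - 1)) * (a 1 + α 1)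
        = (a 0 + 1 / (a (-1) + β (-1))) * (a 1 + α 1) := by rw [sub_self, hβ0]
      _ ≤ (a 0 + 1 / (a 1 + α 1)) * (a (-1) + β (-1)) :=
        (add_one_div_mul_lt_add_one_div_mul (ha' 0).le (hα_pos 1) (hα1.trans hbig_β)).le
      _ = (a (-1) + β (-1)) * (a 0 + α 0) := by rw [hα0, mul_comm]
  · have hα0 : α (-1) = 1 / (a 0 + α 0) := hα.eq_one_div ha' (-1)
    have hβ0 : β (-1) = 1 / (a (-2) + β (-2)) := hβ.eq_one_div ha' (-1)
    have hβ2 : a (-2) + β (-2) < 5 := hsmall_β (-2) (by norm_num) (by norm_num)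
    calc (a (-1 - 1) + β (-1 - 1)) * (a (-1) + α (-1))
        = (a (-1) + 1 / (a 0 + α 0)) * (a (-2) + β (-2)) := by norm_num [hα0, mul_comm]
      _ ≤ (a (-1) + 1 / (a (-2) + β (-2))) * (a 0 + α 0) :=
        (add_one_div_mul_lt_add_one_div_mul (ha' (-1)).le (hβ_pos (-2)) (hβ2.trans hbig_α)).le
      _ = (a (-1) + β (-1)) * (a 0 + α 0) := by rw [hβ0]
  · have hprev := hsmall_β (j - 1) (by omega) (by omega)
    have hcur := hsmall_α j hj0 hjm1
    nlinarith [mul_lt_mul'' hprev hcur (hβ_pos _).le (hα_pos j).le]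

theorem backward_mul_forward_eq {a α β : ℤ → ℝ} (ha : ∀ t, 0 < a t) (hα : IsTailCF a 1 α)
    (hβ : IsTailCF a (-1) β) (j : ℤ) :
    β j * α (j - 1) = 1 / ((a (j - 1) + β (j - 1)) * (a j + α j)) := by
  rw [hβ.eq_one_div ha, hα.eq_one_div ha, ← sub_eq_add_neg, sub_add_cancel, one_div_mul_one_div]

theorem middle_le_backward_mul_forward {a α β : ℤ → ℝ} (ha : ∀ t, 1 ≤ a t) (h0 : 5 ≤ a 0)
    (h1 : 5 ≤ a (-1)) (hsmall : ∀ t, t ≠ 0 → t ≠ -1 → a t ≤ 4) (hα : IsTailCF a 1 α)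
    (hβ : IsTailCF a (-1) β) (j : ℤ) : β 0 * α (-1) ≤ β j * α (j - 1) := by
  have ha' : ∀ t, 0 < a t := fun t => one_pos.trans_le (ha t)
  rw [backward_mul_forward_eq ha' hα hβ, show (-1 : ℤ) = 0 - 1 by norm_num,
    backward_mul_forward_eq ha' hα hβ]
  refine one_div_le_one_div_of_le ?_ (denom_le_middle ha h0 h1 hsmall hα hβ j)
  exact mul_pos (add_pos (ha' _) (hβ.pos ha' _)) (add_pos (ha' _) (hα.pos ha' _))

/-- This is how `(List.range n).map f` elaborates for `f : ℤ → α`: the list is lifted to `List ℤ`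
through the list monad. -/
theorem List.map_coe_range {α : Type*} (f : ℤ → α) (n : ℕ) :
    ((List.range n : List ℕ) : List ℤ).map f = (List.range n).map fun i : ℕ => f i := by
  simp only [List.bind_eq_flatMap, List.pure_def, ← List.map_eq_flatMap, List.map_map]
  rfl

/-- For a bi-infinite positive integer sequence with `a₋₁, a₀ ≥ 5` and all other
terms at most `4`, the product `β₀ α₋₁` (where
`α_j = [0; a_{j+1}, a_{j+2}, ...]`, `β_j = [0; a_{j-1}, a_{j-2}, ...]`) is the
infimum (indeed the least element) of `{β_j α_{j-1} : j ∈ ℤ}`. In particular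
`5(a₀ + 1/a₋₁) < (a₀ + 1/5)(a₋₁ + 1/5)`. -/
theorem large_middle_infimum (a : ℤ → ℕ+)
    (h0 : 5 ≤ a 0) (h1 : 5 ≤ a (-1))
    (hsmall : ∀ t : ℤ, t ≠ 0 → t ≠ -1 → a t ≤ 4)
    (α β : ℤ → ℝ)
    (hα : ∀ j : ℤ, Tendsto
      (fun n => cfVal ((List.range n).map fun i => ((a (j + 1 + (i : ℤ)) : ℕ) : ℝ)))
      atTop (nhds (α j)))
    (hβ : ∀ j : ℤ, Tendsto
      (fun n => cfVal ((List.range n).map fun i => ((a (j - 1 - (i : ℤ)) : ℕ) : ℝ)))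
      atTop (nhds (β j))) :
    IsLeast {r : ℝ | ∃ j : ℤ, r = β j * α (j - 1)} (β 0 * α (-1)) ∧
    5 * ((a 0 : ℝ) + 1 / (a (-1) : ℝ)) <
      ((a 0 : ℝ) + 1 / 5) * ((a (-1) : ℝ) + 1 / 5) := by
  have hα' : IsTailCF (fun t => ((a t : ℕ) : ℝ)) 1 α := fun j => by
    refine (hα j).congr fun n => congrArg cfVal ?_
    rw [List.map_coe_range]
    exact List.map_congr_left fun i _ => by ring_nf
  have hβ' : IsTailCF (fun t => ((a t : ℕ) : ℝ)) (-1) β := fun j => by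
    refine (hβ j).congr fun n => congrArg cfVal ?_
    rw [List.map_coe_range]
    exact List.map_congr_left fun i _ => by ring_nf
  have h0' : (5 : ℝ) ≤ (a 0 : ℕ) := by exact_mod_cast h0
  have h1' : (5 : ℝ) ≤ (a (-1) : ℕ) := by exact_mod_cast h1
  refine ⟨⟨⟨0, rfl⟩, ?_⟩, ?_⟩
  · rintro _ ⟨j, rfl⟩
    exact middle_le_backward_mul_forward (fun t => Nat.one_le_cast.mpr (a t).pos) h0' h1'
      (fun t ht0 ht1 => by exact_mod_cast hsmall t ht0 ht1) hα' hβ' j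
  · calc 5 * ((a 0 : ℝ) + 1 / (a (-1) : ℝ)) ≤ 5 * ((a 0 : ℝ) + 1 / 5) := by gcongr
      _ < ((a (-1) : ℝ) + 1 / 5) * ((a 0 : ℝ) + 1 / 5) := by gcongr; linarith
      _ = ((a 0 : ℝ) + 1 / 5) * ((a (-1) : ℝ) + 1 / 5) := mul_comm _ _
end

section
/- Let C, D ⊂ [0,1] be general Cantor sets containing 0 and 1 with aperture ratios Ap(C), Ap(D), and let g : [0,1]² → ℝ be C¹ with ∂g/∂α > 0 and ∂g/∂β > 0 everywhere, such that for all (α, β) ∈ [0,1]², the ratio |∂g/∂α ÷ ∂g/∂β| lies in [Ap(C), Ap(C)⁻¹] ∩ [Ap(D), Ap(D)⁻¹]. Then {g(α, β) : α ∈ C, β ∈ D} = [g(0,0), g(1,1)]. -/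
/-!
Suppose `y ∈ (g(0,0), g(1,1))` is not attained on `C × D`, and run Newhouse's gap lemma along
the level set `{g = y}`. Call a gap `U` of `C` and a gap `V` of `D` linked when the level set
cuts off the lower-left or the upper-right corner of the rectangle `U × V`. The bounds on
`∂g/∂α ÷ ∂g/∂β` say that a horizontal step of length `ℓ` outweighs a vertical step of length at
most `Ap · ℓ`, and vice versa. With the aperture bound this lets the larger of two linked gaps,
say `U`, be replaced by a gap of `C` inside one of the two intervals bordering `U`, still linked
with `V` (the cut corner switches). Such a step shrinks the total length of the two construction
intervals carrying the gaps by at least the larger gap, so there are linked pairs with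
arbitrarily small gaps. Their corners lie in `C × D` on both sides of the level `y`, which is
impossible: the compact pieces of `C × D` where `g < y` and where `g > y` are at positive
distance.
-/


/-- A construction scheme for a general Cantor set in `[0,1]`: intervals are
indexed by finite boolean strings; the interval of `s` is `[l s, r s]`, and it
splits into the two children `[l s, r (false :: s)] ∪ [l (true :: s), r s]`
with `l s < r (false :: s) < l (true :: s) < r s`. -/
structure CantorScheme where
  l : List Bool → ℝ
  r : List Bool → ℝ
  l_nil : l [] = 0
  r_nil : r [] = 1
  l_false : ∀ s, l (false :: s) = l s
  r_true : ∀ s, r (true :: s) = r s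
  lt1 : ∀ s, l s < r (false :: s)
  lt2 : ∀ s, r (false :: s) < l (true :: s)
  lt3 : ∀ s, l (true :: s) < r s

/-- The resulting Cantor set: the intersection over `n` of the unions of the
level-`n` intervals. -/
def CantorScheme.set (S : CantorScheme) : Set ℝ :=
  ⋂ n : ℕ, ⋃ s ∈ {s : List Bool | s.length = n}, Set.Icc (S.l s) (S.r s)

/-- The aperture ratio: the supremum, over all construction steps, of the ratio
of the removed gap to each of the two retained subintervals. -/
noncomputable def CantorScheme.aperture (S : CantorScheme) : ℝ :=
  ⨆ s : List Bool,
    max ((S.l (true :: s) - S.r (false :: s)) / (S.r (false :: s) - S.l s))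
        ((S.l (true :: s) - S.r (false :: s)) / (S.r s - S.l (true :: s)))

open Set
open scoped unitInterval

namespace CantorScheme

variable (S : CantorScheme) {s t u : List Bool} {x : ℝ}

def gapL (s : List Bool) : ℝ := S.r (false :: s)

def gapR (s : List Bool) : ℝ := S.l (true :: s)

lemma l_lt_r (s : List Bool) : S.l s < S.r s :=
  (S.lt1 s).trans ((S.lt2 s).trans (S.lt3 s))

lemma l_lt_gapL (s : List Bool) : S.l s < S.gapL s := S.lt1 s

lemma gapL_lt_gapR (s : List Bool) : S.gapL s < S.gapR s := S.lt2 s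

lemma gapR_lt_r (s : List Bool) : S.gapR s < S.r s := S.lt3 s

lemma l_le_l_cons (c : Bool) (s : List Bool) : S.l s ≤ S.l (c :: s) := by
  cases c
  · exact (S.l_false s).ge
  · exact ((S.lt1 s).trans (S.lt2 s)).le

lemma r_cons_le_r (c : Bool) (s : List Bool) : S.r (c :: s) ≤ S.r s := by
  cases c
  · exact ((S.lt2 s).trans (S.lt3 s)).le
  · exact (S.r_true s).le

lemma l_le_l_of_isSuffix (h : s <:+ t) : S.l s ≤ S.l t := by
  obtain ⟨u, rfl⟩ := h
  induction u with
  | nil => rfl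
  | cons c u ih => exact ih.trans (S.l_le_l_cons c _)

lemma r_le_r_of_isSuffix (h : s <:+ t) : S.r t ≤ S.r s := by
  obtain ⟨u, rfl⟩ := h
  induction u with
  | nil => rfl
  | cons c u ih => exact (S.r_cons_le_r c _).trans ih

lemma Icc_subset_Icc_of_isSuffix (h : s <:+ t) : Icc (S.l t) (S.r t) ⊆ Icc (S.l s) (S.r s) :=
  Icc_subset_Icc (S.l_le_l_of_isSuffix h) (S.r_le_r_of_isSuffix h)

lemma l_mem_unitInterval (s : List Bool) : S.l s ∈ I :=
  ⟨S.l_nil ▸ S.l_le_l_of_isSuffix List.nil_suffix,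
    (S.l_lt_r s).le.trans (S.r_nil ▸ S.r_le_r_of_isSuffix List.nil_suffix)⟩

lemma r_mem_unitInterval (s : List Bool) : S.r s ∈ I :=
  ⟨(S.l_mem_unitInterval s).1.trans (S.l_lt_r s).le,
    S.r_nil ▸ S.r_le_r_of_isSuffix List.nil_suffix⟩

lemma gapL_mem_unitInterval (s : List Bool) : S.gapL s ∈ I := S.r_mem_unitInterval _

lemma gapR_mem_unitInterval (s : List Bool) : S.gapR s ∈ I := S.l_mem_unitInterval _

lemma mem_set_iff :
    x ∈ S.set ↔ ∀ n, ∃ s : List Bool, s.length = n ∧ x ∈ Icc (S.l s) (S.r s) := by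
  simp only [CantorScheme.set, mem_iInter, mem_iUnion, mem_ofPred_eq, exists_prop]

lemma mem_set_of_forall (h : ∀ n, ∃ s : List Bool, n ≤ s.length ∧ x ∈ Icc (S.l s) (S.r s)) :
    x ∈ S.set := by
  refine S.mem_set_iff.2 fun n => ?_
  obtain ⟨s, hn, hx⟩ := h n
  exact ⟨s.drop (s.length - n), by rw [List.length_drop]; omega,
    S.Icc_subset_Icc_of_isSuffix (List.drop_suffix _ _) hx⟩

lemma l_replicate_false_append (n : ℕ) (s : List Bool) :
    S.l (List.replicate n false ++ s) = S.l s := by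
  induction n with
  | zero => rfl
  | succ n ih => rw [List.replicate_succ, List.cons_append, S.l_false, ih]

lemma r_replicate_true_append (n : ℕ) (s : List Bool) :
    S.r (List.replicate n true ++ s) = S.r s := by
  induction n with
  | zero => rfl
  | succ n ih => rw [List.replicate_succ, List.cons_append, S.r_true, ih]

lemma l_mem_set (s : List Bool) : S.l s ∈ S.set := by
  refine S.mem_set_of_forall fun n => ⟨List.replicate n false ++ s, by simp, ?_⟩
  rw [S.l_replicate_false_append]
  exact ⟨le_rfl, (S.l_replicate_false_append n s ▸ S.l_lt_r _).le⟩

lemma r_mem_set (s : List Bool) : S.r s ∈ S.set := by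
  refine S.mem_set_of_forall fun n => ⟨List.replicate n true ++ s, by simp, ?_⟩
  rw [S.r_replicate_true_append]
  exact ⟨(S.r_replicate_true_append n s ▸ S.l_lt_r _).le, le_rfl⟩

lemma gapL_mem_set (s : List Bool) : S.gapL s ∈ S.set := S.r_mem_set _

lemma gapR_mem_set (s : List Bool) : S.gapR s ∈ S.set := S.l_mem_set _

lemma zero_mem_set : (0 : ℝ) ∈ S.set := S.l_nil ▸ S.l_mem_set []

lemma one_mem_set : (1 : ℝ) ∈ S.set := S.r_nil ▸ S.r_mem_set []

lemma set_subset_unitInterval : S.set ⊆ I := fun x hx => by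
  obtain ⟨s, -, hs⟩ := S.mem_set_iff.1 hx 0
  exact ⟨(S.l_mem_unitInterval s).1.trans hs.1, hs.2.trans (S.r_mem_unitInterval s).2⟩

lemma isCompact_set : IsCompact S.set :=
  isCompact_Icc.of_isClosed_subset
    (isClosed_iInter fun n =>
      (List.finite_length_eq Bool n).isClosed_biUnion fun _ _ => isClosed_Icc)
    S.set_subset_unitInterval

lemma mem_child_or_mem_gap (hx : x ∈ Icc (S.l s) (S.r s)) :
    x ∈ Icc (S.l (false :: s)) (S.r (false :: s)) ∨ x ∈ Ioo (S.gapL s) (S.gapR s) ∨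
      x ∈ Icc (S.l (true :: s)) (S.r (true :: s)) := by
  rw [S.l_false, S.r_true]
  by_cases h₁ : x ≤ S.gapL s
  · exact Or.inl ⟨hx.1, h₁⟩
  by_cases h₂ : S.gapR s ≤ x
  · exact Or.inr (Or.inr ⟨h₂, hx.2⟩)
  exact Or.inr (Or.inl ⟨not_le.1 h₁, not_le.1 h₂⟩)

lemma exists_gap_mem (hx : x ∈ Icc (S.l u) (S.r u)) (hxS : x ∉ S.set) :
    ∃ p, u <:+ p ∧ x ∈ Ioo (S.gapL p) (S.gapR p) := by
  by_contra! h
  suffices ∀ n, ∃ s, u <:+ s ∧ n ≤ s.length ∧ x ∈ Icc (S.l s) (S.r s) from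
    hxS (S.mem_set_of_forall fun n => (this n).imp fun _ hs => hs.2)
  intro n
  induction n with
  | zero => exact ⟨u, List.suffix_refl u, Nat.zero_le _, hx⟩
  | succ n ih =>
    obtain ⟨s, hus, hn, hxs⟩ := ih
    rcases S.mem_child_or_mem_gap hxs with hc | hc | hc
    · exact ⟨_, hus.trans (List.suffix_cons _ _), by simpa using hn, hc⟩
    · exact absurd hc (h s hus)
    · exact ⟨_, hus.trans (List.suffix_cons _ _), by simpa using hn, hc⟩

lemma exists_gap_crossing {f : ℝ → ℝ} {y : ℝ} (hf : Continuous f) (hmono : MonotoneOn f I)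
    (hy : ∀ x ∈ S.set, f x ≠ y) (h₁ : f (S.l u) < y) (h₂ : y < f (S.r u)) :
    ∃ p, u <:+ p ∧ f (S.gapL p) < y ∧ y < f (S.gapR p) := by
  obtain ⟨x, hx, rfl⟩ := intermediate_value_Ioo (S.l_lt_r u).le hf.continuousOn ⟨h₁, h₂⟩
  obtain ⟨p, hup, hxp⟩ := S.exists_gap_mem (Ioo_subset_Icc_self hx) fun hxS => hy x hxS rfl
  have hxI : x ∈ I :=
    ⟨(S.l_mem_unitInterval u).1.trans hx.1.le, hx.2.le.trans (S.r_mem_unitInterval u).2⟩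
  exact ⟨p, hup,
    (hmono (S.gapL_mem_unitInterval p) hxI hxp.1.le).lt_of_ne (hy _ (S.gapL_mem_set p)),
    (hmono hxI (S.gapR_mem_unitInterval p) hxp.2.le).lt_of_ne' (hy _ (S.gapR_mem_set p))⟩

lemma r_sub_l_add_gap_le {c : Bool} (h : c :: s <:+ t) :
    S.r t - S.l t + (S.gapR s - S.gapL s) ≤ S.r s - S.l s := by
  cases c
  · have hl : S.l s ≤ S.l t := S.l_false s ▸ S.l_le_l_of_isSuffix h
    have hr : S.r t ≤ S.gapL s := S.r_le_r_of_isSuffix h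
    linarith [S.gapR_lt_r s]
  · have hl : S.gapR s ≤ S.l t := S.l_le_l_of_isSuffix h
    have hr : S.r t ≤ S.r s := S.r_true s ▸ S.r_le_r_of_isSuffix h
    linarith [S.l_lt_gapL s]

/-- `S.ApertureLE a` says `S.aperture ≤ a`, without the junk value `0` of an unbounded
supremum. -/
def ApertureLE (a : ℝ) : Prop :=
  ∀ s, S.gapR s - S.gapL s ≤ a * (S.gapL s - S.l s) ∧
    S.gapR s - S.gapL s ≤ a * (S.r s - S.gapR s)

variable {S}

lemma ApertureLE.pos {a : ℝ} (h : S.ApertureLE a) : 0 < a :=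
  pos_of_mul_pos_left ((sub_pos.2 (S.gapL_lt_gapR [])).trans_le (h []).1)
    (sub_pos.2 (S.l_lt_gapL [])).le

lemma ApertureLE.mono {a b : ℝ} (h : S.ApertureLE a) (hab : a ≤ b) : S.ApertureLE b :=
  fun s =>
    ⟨(h s).1.trans (mul_le_mul_of_nonneg_right hab (sub_pos.2 (S.l_lt_gapL s)).le),
      (h s).2.trans (mul_le_mul_of_nonneg_right hab (sub_pos.2 (S.gapR_lt_r s)).le)⟩

lemma ApertureLE.gap_le {a : ℝ} (h : S.ApertureLE a) (s : List Bool) :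
    S.gapR s - S.gapL s ≤ a := by
  refine (h s).1.trans (mul_le_of_le_one_right h.pos.le ?_)
  linarith [(S.l_mem_unitInterval s).1, (S.gapL_mem_unitInterval s).2]

lemma apertureLE_aperture (h : 0 < S.aperture) : S.ApertureLE S.aperture := by
  have hbdd : BddAbove (range fun s : List Bool =>
      max ((S.l (true :: s) - S.r (false :: s)) / (S.r (false :: s) - S.l s))
        ((S.l (true :: s) - S.r (false :: s)) / (S.r s - S.l (true :: s)))) := by
    by_contra hb
    exact h.ne' (Real.iSup_of_not_bddAbove hb)
  intro s
  have hs := le_ciSup hbdd s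
  exact ⟨(div_le_iff₀ (sub_pos.2 (S.l_lt_gapL s))).1 ((le_max_left _ _).trans hs),
    (div_le_iff₀ (sub_pos.2 (S.gapR_lt_r s))).1 ((le_max_right _ _).trans hs)⟩

end CantorScheme

/-- The integrated form of `κ ≤ (∂g/∂α) / (∂g/∂β) ≤ κ⁻¹` on the unit square. -/
structure LevelSlopeBounded (κ : ℝ) (g : ℝ × ℝ → ℝ) : Prop where
  le_of_right : ∀ ⦃a b a' b'⦄, a ∈ I → b ∈ I → a' ∈ I → b' ∈ I →
    a ≤ a' → b - b' ≤ κ * (a' - a) → g (a, b) ≤ g (a', b')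
  le_of_up : ∀ ⦃a b a' b'⦄, a ∈ I → b ∈ I → a' ∈ I → b' ∈ I →
    b ≤ b' → a - a' ≤ κ * (b' - b) → g (a, b) ≤ g (a', b')

namespace LevelSlopeBounded

variable {κ : ℝ} {g : ℝ × ℝ → ℝ}

lemma swap (hg : LevelSlopeBounded κ g) : LevelSlopeBounded κ (g ∘ Prod.swap) where
  le_of_right _ _ _ _ ha hb ha' hb' h h' := hg.le_of_up hb ha hb' ha' h h'
  le_of_up _ _ _ _ ha hb ha' hb' h h' := hg.le_of_right hb ha hb' ha' h h'

lemma mono (hg : LevelSlopeBounded κ g) (hκ : 0 ≤ κ) {a b a' b' : ℝ} (ha : a ∈ I) (hb : b ∈ I)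
    (ha' : a' ∈ I) (hb' : b' ∈ I) (h : a ≤ a') (h' : b ≤ b') : g (a, b) ≤ g (a', b') :=
  hg.le_of_right ha hb ha' hb' h (by nlinarith)

lemma monotoneOn_fst (hg : LevelSlopeBounded κ g) (hκ : 0 ≤ κ) {b : ℝ} (hb : b ∈ I) :
    MonotoneOn (fun a => g (a, b)) I := fun _ ha _ ha' h => hg.mono hκ ha hb ha' hb h le_rfl

lemma monotoneOn_snd (hg : LevelSlopeBounded κ g) (hκ : 0 ≤ κ) {a : ℝ} (ha : a ∈ I) :
    MonotoneOn (fun b => g (a, b)) I :=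
  hg.swap.monotoneOn_fst hκ ha

end LevelSlopeBounded

lemma exists_sub_eq_partials {g : ℝ × ℝ → ℝ} (hg : Differentiable ℝ g) {p q : ℝ × ℝ}
    (hp : p ∈ Icc 0 1) (hq : q ∈ Icc 0 1) :
    ∃ ξ ∈ Icc (0 : ℝ × ℝ) 1,
      g q - g p = fderiv ℝ g ξ (1, 0) * (q.1 - p.1) + fderiv ℝ g ξ (0, 1) * (q.2 - p.2) := by
  obtain ⟨ξ, hξ, h⟩ := domain_mvt (fun x _ => (hg x).hasFDerivAt.hasFDerivWithinAt)
    (convex_Icc 0 1) hp hq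
  refine ⟨ξ, (convex_Icc 0 1).segment_subset hp hq hξ, h.trans ?_⟩
  have : q - p = (q.1 - p.1) • ((1 : ℝ), (0 : ℝ)) + (q.2 - p.2) • ((0 : ℝ), (1 : ℝ)) := by
    ext <;> simp
  rw [this, map_add, map_smul, map_smul, smul_eq_mul, smul_eq_mul, mul_comm,
    mul_comm (q.2 - p.2)]

lemma levelSlopeBounded_of_fderiv {κ : ℝ} {g : ℝ × ℝ → ℝ} (hκ : 0 < κ)
    (hg : Differentiable ℝ g)
    (hpos : ∀ p ∈ Icc (0 : ℝ × ℝ) 1, 0 < fderiv ℝ g p (1, 0) ∧ 0 < fderiv ℝ g p (0, 1))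
    (hratio : ∀ p ∈ Icc (0 : ℝ × ℝ) 1,
      fderiv ℝ g p (1, 0) / fderiv ℝ g p (0, 1) ∈ Icc κ κ⁻¹) :
    LevelSlopeBounded κ g := by
  have hκ' : ∀ p ∈ Icc (0 : ℝ × ℝ) 1,
      κ * fderiv ℝ g p (0, 1) ≤ fderiv ℝ g p (1, 0) ∧
        κ * fderiv ℝ g p (1, 0) ≤ fderiv ℝ g p (0, 1) :=
    fun p hp => ⟨(le_div_iff₀ (hpos p hp).2).1 (hratio p hp).1,
      (le_inv_mul_iff₀ hκ).1 ((div_le_iff₀ (hpos p hp).2).1 (hratio p hp).2)⟩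
  constructor
  · intro a b a' b' ha hb ha' hb' h h'
    obtain ⟨ξ, hξ, hmvt⟩ := exists_sub_eq_partials hg (p := (a, b)) (q := (a', b'))
      ⟨⟨ha.1, hb.1⟩, ⟨ha.2, hb.2⟩⟩ ⟨⟨ha'.1, hb'.1⟩, ⟨ha'.2, hb'.2⟩⟩
    nlinarith [mul_nonneg (sub_nonneg.2 (hκ' ξ hξ).1) (sub_nonneg.2 h),
      mul_nonneg (hpos ξ hξ).2.le (sub_nonneg.2 h')]
  · intro a b a' b' ha hb ha' hb' h h'
    obtain ⟨ξ, hξ, hmvt⟩ := exists_sub_eq_partials hg (p := (a, b)) (q := (a', b'))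
      ⟨⟨ha.1, hb.1⟩, ⟨ha.2, hb.2⟩⟩ ⟨⟨ha'.1, hb'.1⟩, ⟨ha'.2, hb'.2⟩⟩
    nlinarith [mul_nonneg (sub_nonneg.2 (hκ' ξ hξ).2) (sub_nonneg.2 h),
      mul_nonneg (hpos ξ hξ).1.le (sub_nonneg.2 h')]

section GapWalk

variable {C D : CantorScheme} {g : ℝ × ℝ → ℝ} {κ y : ℝ} {s t u : List Bool}

def CutsLowerCorner (g : ℝ × ℝ → ℝ) (y : ℝ) (C D : CantorScheme) (s t : List Bool) : Prop :=
  g (C.gapL s, D.gapL t) < y ∧ y < g (C.gapL s, D.gapR t) ∧ y < g (C.gapR s, D.gapL t)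

def CutsUpperCorner (g : ℝ × ℝ → ℝ) (y : ℝ) (C D : CantorScheme) (s t : List Bool) : Prop :=
  g (C.gapL s, D.gapR t) < y ∧ g (C.gapR s, D.gapL t) < y ∧ y < g (C.gapR s, D.gapR t)

lemma cutsLowerCorner_swap :
    CutsLowerCorner (g ∘ Prod.swap) y D C t s ↔ CutsLowerCorner g y C D s t :=
  ⟨fun ⟨h₁, h₂, h₃⟩ => ⟨h₁, h₃, h₂⟩, fun ⟨h₁, h₂, h₃⟩ => ⟨h₁, h₃, h₂⟩⟩

lemma cutsUpperCorner_swap :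
    CutsUpperCorner (g ∘ Prod.swap) y D C t s ↔ CutsUpperCorner g y C D s t :=
  ⟨fun ⟨h₁, h₂, h₃⟩ => ⟨h₂, h₁, h₃⟩, fun ⟨h₁, h₂, h₃⟩ => ⟨h₂, h₁, h₃⟩⟩

-- The level set crosses the right end of the interval `u` within the height range of the gap `t`;
-- as `t` is short against `u`, it then crosses the top of `t` inside a gap `p` of `C` within `u`.
lemma exists_cutsUpperCorner_fst (hκ : 0 ≤ κ) (hg : LevelSlopeBounded κ g)
    (hgc : Continuous g) (hy : ∀ a ∈ C.set, ∀ b ∈ D.set, g (a, b) ≠ y)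
    (h₁ : g (C.r u, D.gapL t) < y) (h₂ : y < g (C.r u, D.gapR t))
    (hu : D.gapR t - D.gapL t ≤ κ * (C.r u - C.l u)) :
    ∃ p, u <:+ p ∧ CutsUpperCorner g y C D p t := by
  have hl : g (C.l u, D.gapR t) < y :=
    (hg.le_of_right (C.l_mem_unitInterval u) (D.gapR_mem_unitInterval t)
      (C.r_mem_unitInterval u) (D.gapL_mem_unitInterval t) (C.l_lt_r u).le hu).trans_lt h₁
  obtain ⟨p, hup, hp₁, hp₂⟩ := C.exists_gap_crossing (hgc.comp (Continuous.prodMk_left _))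
    (hg.monotoneOn_fst hκ (D.gapR_mem_unitInterval t))
    (fun a ha => hy a ha _ (D.gapR_mem_set t)) hl h₂
  refine ⟨p, hup, hp₁, ?_, hp₂⟩
  exact (hg.mono hκ (C.gapR_mem_unitInterval p) (D.gapL_mem_unitInterval t)
    (C.r_mem_unitInterval u) (D.gapL_mem_unitInterval t)
    ((C.gapR_lt_r p).le.trans (C.r_le_r_of_isSuffix hup)) le_rfl).trans_lt h₁

lemma exists_cutsLowerCorner_fst (hκ : 0 ≤ κ) (hg : LevelSlopeBounded κ g)
    (hgc : Continuous g) (hy : ∀ a ∈ C.set, ∀ b ∈ D.set, g (a, b) ≠ y)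
    (h₁ : g (C.l u, D.gapL t) < y) (h₂ : y < g (C.l u, D.gapR t))
    (hu : D.gapR t - D.gapL t ≤ κ * (C.r u - C.l u)) :
    ∃ p, u <:+ p ∧ CutsLowerCorner g y C D p t := by
  have hr : y < g (C.r u, D.gapL t) :=
    h₂.trans_le (hg.le_of_right (C.l_mem_unitInterval u) (D.gapR_mem_unitInterval t)
      (C.r_mem_unitInterval u) (D.gapL_mem_unitInterval t) (C.l_lt_r u).le hu)
  obtain ⟨p, hup, hp₁, hp₂⟩ := C.exists_gap_crossing (hgc.comp (Continuous.prodMk_left _))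
    (hg.monotoneOn_fst hκ (D.gapL_mem_unitInterval t))
    (fun a ha => hy a ha _ (D.gapL_mem_set t)) h₁ hr
  refine ⟨p, hup, hp₁, ?_, hp₂⟩
  exact h₂.trans_le (hg.mono hκ (C.l_mem_unitInterval u) (D.gapR_mem_unitInterval t)
    (C.gapL_mem_unitInterval p) (D.gapR_mem_unitInterval t)
    ((C.l_le_l_of_isSuffix hup).trans (C.l_lt_gapL p).le) le_rfl)

def Linked (g : ℝ × ℝ → ℝ) (y : ℝ) (C D : CantorScheme) (s t : List Bool) : Prop :=
  CutsLowerCorner g y C D s t ∨ CutsUpperCorner g y C D s t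

lemma Linked.lt_and_lt (hκ : 0 ≤ κ) (hg : LevelSlopeBounded κ g) (h : Linked g y C D s t) :
    g (C.gapL s, D.gapL t) < y ∧ y < g (C.gapR s, D.gapR t) := by
  rcases h with ⟨h₁, h₂, -⟩ | ⟨-, h₂, h₃⟩
  · exact ⟨h₁, h₂.trans_le (hg.mono hκ (C.gapL_mem_unitInterval s)
      (D.gapR_mem_unitInterval t) (C.gapR_mem_unitInterval s) (D.gapR_mem_unitInterval t)
      (C.gapL_lt_gapR s).le le_rfl)⟩
  · exact ⟨(hg.mono hκ (C.gapL_mem_unitInterval s) (D.gapL_mem_unitInterval t)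
      (C.gapR_mem_unitInterval s) (D.gapL_mem_unitInterval t) (C.gapL_lt_gapR s).le
      le_rfl).trans_lt h₂, h₃⟩

lemma linked_swap : Linked (g ∘ Prod.swap) y D C t s ↔ Linked g y C D s t :=
  or_congr cutsLowerCorner_swap cutsUpperCorner_swap

lemma Linked.exists_step_fst (hC : C.ApertureLE κ) (hg : LevelSlopeBounded κ g)
    (hgc : Continuous g) (hy : ∀ a ∈ C.set, ∀ b ∈ D.set, g (a, b) ≠ y)
    (h : Linked g y C D s t) (hts : D.gapR t - D.gapL t ≤ C.gapR s - C.gapL s) :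
    ∃ p, Linked g y C D p t ∧ C.r p - C.l p + (C.gapR s - C.gapL s) ≤ C.r s - C.l s := by
  rcases h with h | h
  · obtain ⟨p, hp, hcut⟩ := exists_cutsUpperCorner_fst (u := false :: s) hC.pos.le hg hgc hy
      h.1 h.2.1 (by rw [C.l_false]; exact hts.trans (hC s).1)
    exact ⟨p, Or.inr hcut, C.r_sub_l_add_gap_le hp⟩
  · obtain ⟨p, hp, hcut⟩ := exists_cutsLowerCorner_fst (u := true :: s) hC.pos.le hg hgc hy
      h.2.1 h.2.2 (by rw [C.r_true]; exact hts.trans (hC s).2)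
    exact ⟨p, Or.inl hcut, C.r_sub_l_add_gap_le hp⟩

lemma Linked.exists_step (hC : C.ApertureLE κ) (hD : D.ApertureLE κ)
    (hg : LevelSlopeBounded κ g) (hgc : Continuous g)
    (hy : ∀ a ∈ C.set, ∀ b ∈ D.set, g (a, b) ≠ y) (h : Linked g y C D s t) :
    ∃ s' t', Linked g y C D s' t' ∧
      C.r s' - C.l s' + (D.r t' - D.l t') + max (C.gapR s - C.gapL s) (D.gapR t - D.gapL t) ≤
        C.r s - C.l s + (D.r t - D.l t) := by
  rcases le_total (D.gapR t - D.gapL t) (C.gapR s - C.gapL s) with hts | hst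
  · obtain ⟨p, hlink, hlen⟩ := h.exists_step_fst hC hg hgc hy hts
    exact ⟨p, t, hlink, by rw [max_eq_left hts]; linarith⟩
  · obtain ⟨p, hlink, hlen⟩ := (linked_swap.2 h).exists_step_fst hD hg.swap
      (hgc.comp continuous_swap) (fun b hb a ha => hy a ha b hb) hst
    exact ⟨s, p, linked_swap.1 hlink, by rw [max_eq_right hst]; linarith⟩

lemma exists_linked (hC : C.ApertureLE κ) (hD : D.ApertureLE κ) (hg : LevelSlopeBounded κ g)
    (hgc : Continuous g) (hy : ∀ a ∈ C.set, ∀ b ∈ D.set, g (a, b) ≠ y)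
    (h₀ : g (0, 0) < y) (h₁ : y < g (1, 1)) : ∃ s t, Linked g y C D s t := by
  have hκ := hC.pos.le
  rcases (hy 1 C.one_mem_set 0 D.zero_mem_set).lt_or_gt with h | h
  · obtain ⟨t, -, ht₁, ht₂⟩ := D.exists_gap_crossing (u := [])
      (hgc.comp (Continuous.prodMk_right 1)) (hg.monotoneOn_snd hκ unitInterval.one_mem)
      (fun b hb => hy 1 C.one_mem_set b hb)
      (by rwa [D.l_nil]) (by rwa [D.r_nil])
    obtain ⟨s, -, hcut⟩ := exists_cutsUpperCorner_fst (u := []) hκ hg hgc hy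
      (by rwa [C.r_nil]) (by rwa [C.r_nil])
      (by rw [C.r_nil, C.l_nil, sub_zero, mul_one]; exact hD.gap_le t)
    exact ⟨s, t, Or.inr hcut⟩
  · obtain ⟨s, -, hs₁, hs₂⟩ := C.exists_gap_crossing (u := [])
      (hgc.comp (Continuous.prodMk_left 0)) (hg.monotoneOn_fst hκ unitInterval.zero_mem)
      (fun a ha => hy a ha 0 D.zero_mem_set)
      (by rwa [C.l_nil]) (by rwa [C.r_nil])
    obtain ⟨t, -, hcut⟩ := exists_cutsLowerCorner_fst (u := []) hκ hg.swap
      (hgc.comp continuous_swap) (fun b hb a ha => hy a ha b hb)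
      (by rwa [D.l_nil]) (by rwa [D.l_nil])
      (by rw [D.r_nil, D.l_nil, sub_zero, mul_one]; exact hC.gap_le s)
    exact ⟨s, t, Or.inl (cutsLowerCorner_swap.1 hcut)⟩

end GapWalk

lemma exists_lt_of_descent {α : Type*} {P : α → Prop} {Φ M : α → ℝ} (hΦ : ∀ a, 0 ≤ Φ a)
    (h₀ : ∃ a, P a) (hstep : ∀ a, P a → ∃ b, P b ∧ Φ b + M a ≤ Φ a) {δ : ℝ} (hδ : 0 < δ) :
    ∃ a, P a ∧ M a < δ := by
  by_contra! hM
  obtain ⟨a₀, ha₀⟩ := h₀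
  have hdesc : ∀ n : ℕ, ∃ a, P a ∧ Φ a + n * δ ≤ Φ a₀ := by
    intro n
    induction n with
    | zero => exact ⟨a₀, ha₀, by simp⟩
    | succ n ih =>
      obtain ⟨a, ha, hΦa⟩ := ih
      obtain ⟨b, hb, hΦb⟩ := hstep a ha
      exact ⟨b, hb, by push_cast; linarith [hM a ha]⟩
  obtain ⟨n, hn⟩ := exists_nat_gt (Φ a₀ / δ)
  obtain ⟨a, -, hΦa⟩ := hdesc n
  rw [div_lt_iff₀ hδ] at hn
  linarith [hΦ a]

lemma IsCompact.exists_pos_le_dist_of_lt_of_lt {X : Type*} [MetricSpace X] {K : Set X}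
    (hK : IsCompact K) {f : X → ℝ} (hf : Continuous f) {y : ℝ} (hy : ∀ p ∈ K, f p ≠ y) :
    ∃ δ > 0, ∀ p ∈ K, ∀ q ∈ K, f p < y → y < f q → δ ≤ dist p q := by
  obtain ⟨r, hr, hsep⟩ := Metric.exists_pos_forall_lt_edist
    (hK.inter_right (isClosed_le hf continuous_const))
    (hK.isClosed.inter (isClosed_le continuous_const hf))
    (disjoint_left.2 fun p hp hq => hy p hp.1 (le_antisymm hp.2 hq.2))
  refine ⟨r, hr, fun p hp q hq hpy hqy => ?_⟩
  have := hsep p ⟨hp, hpy.le⟩ q ⟨hq, hqy.le⟩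
  rw [edist_dist, ← ENNReal.ofReal_coe_nnreal] at this
  exact ((ENNReal.ofReal_lt_ofReal_iff_of_nonneg r.2).1 this).le

theorem image_eq_Icc_of_levelSlopeBounded {C D : CantorScheme} {g : ℝ × ℝ → ℝ} {κ : ℝ}
    (hC : C.ApertureLE κ) (hD : D.ApertureLE κ) (hg : LevelSlopeBounded κ g) (hgc : Continuous g) :
    {y : ℝ | ∃ α ∈ C.set, ∃ β ∈ D.set, g (α, β) = y} = Icc (g (0, 0)) (g (1, 1)) := by
  have hκ := hC.pos.le
  ext y
  constructor
  · rintro ⟨α, hα, β, hβ, rfl⟩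
    have hα' := C.set_subset_unitInterval hα
    have hβ' := D.set_subset_unitInterval hβ
    exact ⟨hg.mono hκ unitInterval.zero_mem unitInterval.zero_mem hα' hβ' hα'.1 hβ'.1,
      hg.mono hκ hα' hβ' unitInterval.one_mem unitInterval.one_mem hα'.2 hβ'.2⟩
  rintro ⟨h₀, h₁⟩
  by_contra hno
  have hy : ∀ a ∈ C.set, ∀ b ∈ D.set, g (a, b) ≠ y := fun a ha b hb h => hno ⟨a, ha, b, hb, h⟩
  obtain ⟨δ, hδ, hsep⟩ := (C.isCompact_set.prod D.isCompact_set).exists_pos_le_dist_of_lt_of_lt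
    hgc fun p hp => hy p.1 hp.1 p.2 hp.2
  obtain ⟨⟨s, t⟩, hlink, hsmall⟩ := exists_lt_of_descent
    (α := List Bool × List Bool) (P := fun st => Linked g y C D st.1 st.2)
    (Φ := fun st => C.r st.1 - C.l st.1 + (D.r st.2 - D.l st.2))
    (M := fun st => max (C.gapR st.1 - C.gapL st.1) (D.gapR st.2 - D.gapL st.2))
    (fun st => add_nonneg (sub_nonneg.2 (C.l_lt_r _).le) (sub_nonneg.2 (D.l_lt_r _).le))
    (Prod.exists.2 <| exists_linked hC hD hg hgc hy
      (h₀.lt_of_ne (hy 0 C.zero_mem_set 0 D.zero_mem_set))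
      (h₁.lt_of_ne' (hy 1 C.one_mem_set 1 D.one_mem_set)))
    (fun _ h => Prod.exists.2 (h.exists_step hC hD hg hgc hy)) hδ
  have hdist := hsep (C.gapL s, D.gapL t) ⟨C.gapL_mem_set s, D.gapL_mem_set t⟩
    (C.gapR s, D.gapR t) ⟨C.gapR_mem_set s, D.gapR_mem_set t⟩
    (hlink.lt_and_lt hκ hg).1 (hlink.lt_and_lt hκ hg).2
  rw [Prod.dist_eq, Real.dist_eq, Real.dist_eq, abs_sub_comm,
    abs_of_pos (sub_pos.2 (C.gapL_lt_gapR s)), abs_sub_comm,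
    abs_of_pos (sub_pos.2 (D.gapL_lt_gapR t))] at hdist
  exact hsmall.not_ge hdist

lemma mem_Icc_max_inv {a b ρ : ℝ} (h : ρ ∈ Icc a a⁻¹ ∩ Icc b b⁻¹) :
    ρ ∈ Icc (max a b) (max a b)⁻¹ := by
  refine ⟨max_le h.1.1 h.2.1, ?_⟩
  rcases max_choice a b with hab | hab <;> rw [hab]
  exacts [h.1.2, h.2.2]

/-- Hall's segment existence theorem: if `g` is `C¹` with positive partial
derivatives whose ratio is compatible with the aperture ratios of the Cantor
sets `C` and `D`, then `{g(α,β) : α ∈ C, β ∈ D}` is the whole interval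
`[g(0,0), g(1,1)]`. -/
theorem cantor_image_interval (C D : CantorScheme) (g : ℝ × ℝ → ℝ)
    (hg : ContDiff ℝ 1 g)
    (hpos : ∀ p ∈ Set.Icc ((0 : ℝ), (0 : ℝ)) ((1 : ℝ), (1 : ℝ)),
      0 < fderiv ℝ g p (1, 0) ∧ 0 < fderiv ℝ g p (0, 1))
    (hratio : ∀ p ∈ Set.Icc ((0 : ℝ), (0 : ℝ)) ((1 : ℝ), (1 : ℝ)),
      |fderiv ℝ g p (1, 0) / fderiv ℝ g p (0, 1)| ∈
        Set.Icc C.aperture C.aperture⁻¹ ∩ Set.Icc D.aperture D.aperture⁻¹) :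
    {y : ℝ | ∃ α ∈ C.set, ∃ β ∈ D.set, g (α, β) = y} =
      Set.Icc (g (0, 0)) (g (1, 1)) := by
  have hratio' : ∀ p ∈ Icc (0 : ℝ × ℝ) 1, fderiv ℝ g p (1, 0) / fderiv ℝ g p (0, 1) ∈
      Icc C.aperture C.aperture⁻¹ ∩ Icc D.aperture D.aperture⁻¹ := fun p hp =>
    abs_of_pos (div_pos (hpos p hp).1 (hpos p hp).2) ▸ hratio p hp
  have h₀ : (0 : ℝ × ℝ) ∈ Icc 0 1 := left_mem_Icc.2 zero_le_one
  have hρ := div_pos (hpos 0 h₀).1 (hpos 0 h₀).2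
  have hC : 0 < C.aperture := inv_pos.1 (hρ.trans_le (hratio' 0 h₀).1.2)
  have hD : 0 < D.aperture := inv_pos.1 (hρ.trans_le (hratio' 0 h₀).2.2)
  exact image_eq_Icc_of_levelSlopeBounded
    ((C.apertureLE_aperture hC).mono (le_max_left _ _))
    ((D.apertureLE_aperture hD).mono (le_max_right _ _))
    (levelSlopeBounded_of_fderiv (lt_max_of_lt_left hC) (hg.differentiable one_ne_zero) hpos
      fun p hp => mem_Icc_max_inv (hratio' p hp))
    hg.continuous
end

section
/- Let Λ ⊂ ℝ² be a unimodular lattice and suppose A ∈ Λ attains the minimal ℓ² norm among nonzero points. Then there exists t₀ ∈ ℝ and a nonzero B ∈ Λ, not parallel to A, with ‖g_{t₀}A‖₂ = ‖g_{t₀}B‖₂ = min over nonzero P ∈ Λ of ‖g_{t₀}P‖₂, and this common value is at least 1. Consequently sup_t min over nonzero P of ‖g_t P‖₂ ≥ 1 for every unimodular lattice Λ, with equality for Λ = ℤ². -/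
/-- The ℓ² norm of `g_t p` where `g_t = diag(eᵗ, e⁻ᵗ)`. -/
noncomputable def l2normAt (t : ℝ) (p : ℝ × ℝ) : ℝ :=
  Real.sqrt ((Real.exp t * p.1) ^ 2 + (Real.exp (-t) * p.2) ^ 2)

/-- The ℓ² systole of the lattice `g_t (ℤu + ℤv)`. -/
noncomputable def l2sys (u v : ℝ × ℝ) (t : ℝ) : ℝ :=
  sInf {r : ℝ | ∃ p ∈ lat u v, p ≠ 0 ∧ r = l2normAt t p}

/-!
Flow a shortest vector `A` of `Λ` by `g_t`. Lattice vectors parallel to `A` are multiples `c • A`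
with `|c| ≥ 1`, so they never overtake it. Since `‖g_t A‖ → ∞` while Hermite's bound keeps the
systole `≤ 2`, some nonparallel vector eventually beats `A`; as only finitely many lattice vectors
can compete on a bounded time interval, the intermediate value theorem gives a time `t₀` at which
`A` is still shortest and a nonparallel `B` ties with it. Then
`1 ≤ |det (A, B)| ≤ ‖g_{t₀} A‖ ‖g_{t₀} B‖ = sys(t₀)²`, since `det (A, B) ∈ ℤ ∖ {0}`.
-/

open Real

def cross (p q : ℝ × ℝ) : ℝ := p.1 * q.2 - p.2 * q.1

noncomputable def innerAt (t : ℝ) (p q : ℝ × ℝ) : ℝ :=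
  exp t ^ 2 * p.1 * q.1 + exp (-t) ^ 2 * p.2 * q.2

def IsShortestAt (u v : ℝ × ℝ) (t : ℝ) (A : ℝ × ℝ) : Prop :=
  ∀ p ∈ lat u v, p ≠ 0 → l2normAt t A ≤ l2normAt t p

lemma fst_ne_zero_or_snd_ne_zero {p : ℝ × ℝ} (hp : p ≠ 0) : p.1 ≠ 0 ∨ p.2 ≠ 0 := by
  contrapose! hp
  exact Prod.ext hp.1 hp.2

section l2normAt

lemma l2normAt_nonneg (t : ℝ) (p : ℝ × ℝ) : 0 ≤ l2normAt t p := sqrt_nonneg _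

lemma l2normAt_sq (t : ℝ) (p : ℝ × ℝ) :
    l2normAt t p ^ 2 = exp t ^ 2 * p.1 ^ 2 + exp (-t) ^ 2 * p.2 ^ 2 := by
  rw [l2normAt, sq_sqrt (by positivity)]; ring

lemma l2normAt_pos (t : ℝ) {p : ℝ × ℝ} (hp : p ≠ 0) : 0 < l2normAt t p := by
  refine sqrt_pos.2 ?_
  rcases fst_ne_zero_or_snd_ne_zero hp with h | h
  · have : 0 < (exp t * p.1) ^ 2 := by positivity
    positivity
  · have : 0 < (exp (-t) * p.2) ^ 2 := by positivity
    positivity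

lemma l2normAt_smul (t c : ℝ) (p : ℝ × ℝ) : l2normAt t (c • p) = |c| * l2normAt t p := by
  simp only [l2normAt, Prod.smul_fst, Prod.smul_snd, smul_eq_mul]
  rw [← sqrt_sq_eq_abs, ← sqrt_mul (sq_nonneg c)]
  ring_nf

lemma continuous_l2normAt (p : ℝ × ℝ) : Continuous fun t ↦ l2normAt t p := by
  unfold l2normAt; fun_prop

lemma exp_mul_abs_fst_le_l2normAt (t : ℝ) (p : ℝ × ℝ) : exp t * |p.1| ≤ l2normAt t p := by
  rw [← abs_of_pos (exp_pos t), ← abs_mul, ← sqrt_sq_eq_abs]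
  exact sqrt_le_sqrt (le_add_of_nonneg_right (sq_nonneg _))

lemma exp_neg_mul_abs_snd_le_l2normAt (t : ℝ) (p : ℝ × ℝ) :
    exp (-t) * |p.2| ≤ l2normAt t p := by
  rw [← abs_of_pos (exp_pos (-t)), ← abs_mul, ← sqrt_sq_eq_abs]
  exact sqrt_le_sqrt (le_add_of_nonneg_left (sq_nonneg _))

lemma l2normAt_le_exp_abs_sub_mul (t s : ℝ) (p : ℝ × ℝ) :
    l2normAt t p ≤ exp |t - s| * l2normAt s p := by
  have h₁ : exp t = exp (t - s) * exp s := by rw [← exp_add]; ring_nf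
  have h₂ : exp (-t) = exp (s - t) * exp (-s) := by rw [← exp_add]; ring_nf
  have e₁ : exp (t - s) ≤ exp |t - s| := exp_le_exp.2 (le_abs_self _)
  have e₂ : exp (s - t) ≤ exp |t - s| := exp_le_exp.2 (abs_sub_comm t s ▸ le_abs_self _)
  rw [← sq_le_sq₀ (l2normAt_nonneg _ _) (mul_nonneg (exp_pos _).le (l2normAt_nonneg _ _)),
    mul_pow, l2normAt_sq, l2normAt_sq, h₁, h₂]
  have : exp (t - s) ^ 2 ≤ exp |t - s| ^ 2 := by gcongr
  have : exp (s - t) ^ 2 ≤ exp |t - s| ^ 2 := by gcongr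
  have := sq_nonneg (exp s * p.1)
  have := sq_nonneg (exp (-s) * p.2)
  nlinarith

lemma exists_lt_l2normAt {A : ℝ × ℝ} (hA : A ≠ 0) (r : ℝ) : ∃ T, r < l2normAt T A := by
  rcases fst_ne_zero_or_snd_ne_zero hA with h | h
  · have h₀ : 0 < |A.1| := abs_pos.2 h
    refine ⟨r / |A.1|, lt_of_lt_of_le ?_ (exp_mul_abs_fst_le_l2normAt _ A)⟩
    have := add_one_le_exp (r / |A.1|)
    calc r < (r / |A.1| + 1) * |A.1| := by field_simp; linarith
      _ ≤ _ := by gcongr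
  · have h₀ : 0 < |A.2| := abs_pos.2 h
    refine ⟨-(r / |A.2|), lt_of_lt_of_le ?_ (exp_neg_mul_abs_snd_le_l2normAt _ A)⟩
    have := add_one_le_exp (r / |A.2|)
    rw [neg_neg]
    calc r < (r / |A.2| + 1) * |A.2| := by field_simp; linarith
      _ ≤ _ := by gcongr

end l2normAt

section cross

lemma cross_sq_add_innerAt_sq (t : ℝ) (p q : ℝ × ℝ) :
    cross p q ^ 2 + innerAt t p q ^ 2 = l2normAt t p ^ 2 * l2normAt t q ^ 2 := by
  have h : exp t * exp (-t) = 1 := by rw [← exp_add]; simp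
  rw [l2normAt_sq, l2normAt_sq, cross, innerAt]
  linear_combination (exp t * exp (-t) + 1) *
    (2 * p.1 * q.1 * p.2 * q.2 - p.1 ^ 2 * q.2 ^ 2 - p.2 ^ 2 * q.1 ^ 2) * h

lemma abs_cross_le (t : ℝ) (p q : ℝ × ℝ) : |cross p q| ≤ l2normAt t p * l2normAt t q := by
  refine abs_le_of_sq_le_sq ?_ (mul_nonneg (l2normAt_nonneg _ _) (l2normAt_nonneg _ _))
  rw [mul_pow, ← cross_sq_add_innerAt_sq t]
  exact le_add_of_nonneg_right (sq_nonneg _)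

lemma cross_sub_zsmul (p q : ℝ × ℝ) (k : ℤ) : cross p (q - k • p) = cross p q := by
  simp only [cross, Prod.fst_sub, Prod.snd_sub, zsmul_eq_mul, Prod.fst_mul,
    Prod.snd_mul, Prod.fst_intCast, Prod.snd_intCast]
  ring

lemma exists_eq_smul_of_cross_eq_zero {A q : ℝ × ℝ} (hA : A ≠ 0) (h : cross A q = 0) :
    ∃ c : ℝ, q = c • A := by
  rw [cross, sub_eq_zero] at h
  rcases fst_ne_zero_or_snd_ne_zero hA with h₁ | h₂
  · refine ⟨q.1 / A.1, Prod.ext ?_ ?_⟩ <;> simp only [Prod.smul_fst, Prod.smul_snd, smul_eq_mul]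
    · field_simp
    · field_simp; linarith
  · refine ⟨q.2 / A.2, Prod.ext ?_ ?_⟩ <;> simp only [Prod.smul_fst, Prod.smul_snd, smul_eq_mul]
    · field_simp; linarith
    · field_simp

lemma ne_zero_of_cross_ne_zero {p q : ℝ × ℝ} (h : cross p q ≠ 0) : q ≠ 0 := by
  rintro rfl
  simp [cross] at h

lemma exists_abs_innerAt_sub_zsmul_le (t : ℝ) {w : ℝ × ℝ} (hw : w ≠ 0) (z : ℝ × ℝ) :
    ∃ k : ℤ, |innerAt t w (z - k • w)| ≤ l2normAt t w ^ 2 / 2 := by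
  have hN : 0 < l2normAt t w ^ 2 := pow_pos (l2normAt_pos t hw) 2
  refine ⟨round (innerAt t w z / l2normAt t w ^ 2), ?_⟩
  have h : innerAt t w (z - round (innerAt t w z / l2normAt t w ^ 2) • w) =
      l2normAt t w ^ 2 * (innerAt t w z / l2normAt t w ^ 2 -
        round (innerAt t w z / l2normAt t w ^ 2)) := by
    simp only [innerAt, l2normAt_sq, Prod.fst_sub, Prod.snd_sub, zsmul_eq_mul, Prod.fst_mul,
      Prod.snd_mul, Prod.fst_intCast, Prod.snd_intCast] at hN ⊢
    field_simp
    ring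
  rw [h, abs_mul, abs_of_pos hN]
  have := abs_sub_round (innerAt t w z / l2normAt t w ^ 2)
  nlinarith

end cross

section lat

variable {u v : ℝ × ℝ}

lemma cross_zsmul_add_zsmul (m n m' n' : ℤ) :
    cross (m • u + n • v) (m' • u + n' • v) = (m * n' - n * m') * cross u v := by
  simp only [cross, Prod.fst_add, Prod.snd_add, zsmul_eq_mul, Prod.fst_mul, Prod.snd_mul,
    Prod.fst_intCast, Prod.snd_intCast]
  ring

lemma exists_cross_eq_int_mul {p q : ℝ × ℝ} (hp : p ∈ lat u v) (hq : q ∈ lat u v) :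
    ∃ k : ℤ, cross p q = k * cross u v := by
  obtain ⟨m, n, rfl⟩ := hp
  obtain ⟨m', n', rfl⟩ := hq
  exact ⟨m * n' - n * m', by rw [cross_zsmul_add_zsmul]; push_cast; ring⟩

lemma one_le_abs_cross (huv : |cross u v| = 1) {p q : ℝ × ℝ} (hp : p ∈ lat u v)
    (hq : q ∈ lat u v) (h : cross p q ≠ 0) : 1 ≤ |cross p q| := by
  obtain ⟨k, hk⟩ := exists_cross_eq_int_mul hp hq
  have hk0 : k ≠ 0 := by rintro rfl; simp [hk] at h
  rw [hk, abs_mul, huv, mul_one, ← Int.cast_abs]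
  exact_mod_cast Int.one_le_abs hk0

lemma sub_zsmul_mem_lat {p q : ℝ × ℝ} (hp : p ∈ lat u v) (hq : q ∈ lat u v) (k : ℤ) :
    q - k • p ∈ lat u v := by
  obtain ⟨m, n, rfl⟩ := hp
  obtain ⟨m', n', rfl⟩ := hq
  exact ⟨m' - k * m, n' - k * n, by simp only [sub_smul, mul_smul, smul_add]; abel⟩

/-- The coefficients of `p` in the basis `u, v` are `cross p v` and `cross u p`, and
`|cross p q| ≤ ‖p‖ ‖q‖`. -/
lemma finite_setOf_mem_lat_l2normAt_zero_le (huv : |cross u v| = 1) (R : ℝ) :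
    {p | p ∈ lat u v ∧ l2normAt 0 p ≤ R}.Finite := by
  set M : ℤ := ⌈R * (l2normAt 0 u + l2normAt 0 v)⌉
  have hM : ∀ (k : ℤ) (x : ℝ), |(k : ℝ)| ≤ R * x → 0 ≤ R → x ≤ l2normAt 0 u + l2normAt 0 v →
      k ∈ Set.Icc (-M) M := by
    intro k x hk hR hx
    rw [Set.mem_Icc, ← abs_le, ← Int.cast_le (R := ℝ), Int.cast_abs]
    exact hk.trans ((mul_le_mul_of_nonneg_left hx hR).trans (Int.le_ceil _))
  refine ((Set.finite_Icc (-M) M).prod (Set.finite_Icc (-M) M)).image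
    (fun mn : ℤ × ℤ ↦ mn.1 • u + mn.2 • v) |>.subset ?_
  rintro p ⟨⟨m, n, rfl⟩, hpR⟩
  have hR : 0 ≤ R := (l2normAt_nonneg _ _).trans hpR
  have hm := cross_zsmul_add_zsmul (u := u) (v := v) m n 0 1
  have hn := cross_zsmul_add_zsmul (u := u) (v := v) 1 0 m n
  simp only [zero_smul, one_smul, zero_add, add_zero, Int.cast_one, Int.cast_zero, mul_one,
    mul_zero, sub_zero, zero_mul, one_mul] at hm hn
  refine ⟨(m, n), ⟨hM m (l2normAt 0 v) ?_ hR ?_, hM n (l2normAt 0 u) ?_ hR ?_⟩, rfl⟩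
  · calc |(m : ℝ)| = |cross (m • u + n • v) v| := by rw [hm, abs_mul, huv, mul_one]
      _ ≤ R * l2normAt 0 v := (abs_cross_le 0 _ _).trans (by gcongr; exact l2normAt_nonneg _ _)
  · linarith [l2normAt_nonneg 0 u]
  · calc |(n : ℝ)| = |cross u (m • u + n • v)| := by rw [hn, abs_mul, huv, mul_one]
      _ ≤ l2normAt 0 u * R := (abs_cross_le 0 _ _).trans (by gcongr; exact l2normAt_nonneg _ _)
      _ = R * l2normAt 0 u := mul_comm _ _
  · linarith [l2normAt_nonneg 0 v]

end lat

section systole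

variable {u v : ℝ × ℝ}

lemma exists_isShortestAt (huv : |cross u v| = 1) (t : ℝ) :
    ∃ w ∈ lat u v, w ≠ 0 ∧ IsShortestAt u v t w := by
  have hu : u ∈ lat u v := ⟨1, 0, by simp⟩
  have hu0 : u ≠ 0 := by rintro rfl; simp [cross] at huv
  set P := {p | p ∈ lat u v ∧ p ≠ 0 ∧ l2normAt t p ≤ l2normAt t u}
  have hP : P.Finite := by
    refine (finite_setOf_mem_lat_l2normAt_zero_le huv (exp |t| * l2normAt t u)).subset ?_
    rintro p ⟨hp, -, hpu⟩
    refine ⟨hp, (l2normAt_le_exp_abs_sub_mul 0 t p).trans ?_⟩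
    rw [zero_sub, abs_neg]
    gcongr
  obtain ⟨w, ⟨hw, hw0, hwu⟩, hmin⟩ := Set.exists_min_image P (l2normAt t) hP ⟨u, hu, hu0, le_rfl⟩
  refine ⟨w, hw, hw0, fun p hp hp0 ↦ ?_⟩
  by_cases hpu : l2normAt t p ≤ l2normAt t u
  · exact hmin p ⟨hp, hp0, hpu⟩
  · exact hwu.trans (not_le.1 hpu).le

lemma IsShortestAt.gcd_eq_one {t : ℝ} {a b : ℤ} (h : IsShortestAt u v t (a • u + b • v))
    (h0 : a • u + b • v ≠ 0) : Int.gcd a b = 1 := by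
  obtain ⟨a', ha⟩ := Int.gcd_dvd_left a b
  obtain ⟨b', hb⟩ := Int.gcd_dvd_right a b
  set g := Int.gcd a b
  have hw : a • u + b • v = (g : ℝ) • (a' • u + b' • v) := by
    rw [ha, hb, mul_smul, mul_smul, ← smul_add, ← Int.cast_smul_eq_zsmul ℝ, Int.cast_natCast]
  have hw0 : a' • u + b' • v ≠ 0 := by
    intro h'
    rw [hw, h', smul_zero] at h0
    exact h0 rfl
  have hg0 : g ≠ 0 := by
    intro hg
    rw [hg, Nat.cast_zero, zero_smul] at hw
    exact h0 hw
  have hle := h _ ⟨a', b', rfl⟩ hw0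
  rw [hw, l2normAt_smul, abs_of_nonneg (Nat.cast_nonneg _)] at hle
  have := l2normAt_pos t hw0
  have : (g : ℝ) ≤ 1 := by nlinarith
  exact le_antisymm (by exact_mod_cast this) (Nat.pos_of_ne_zero hg0)

lemma exists_mem_lat_cross_eq {a b : ℤ} (h : Int.gcd a b = 1) :
    ∃ z ∈ lat u v, cross (a • u + b • v) z = cross u v := by
  refine ⟨-Int.gcdB a b • u + Int.gcdA a b • v, ⟨_, _, rfl⟩, ?_⟩
  have hbez : a * Int.gcdA a b - b * -Int.gcdB a b = 1 := by
    have := Int.gcd_eq_gcd_ab a b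
    rw [h, Nat.cast_one] at this
    linarith
  rw [cross_zsmul_add_zsmul, ← Int.cast_mul, ← Int.cast_mul, ← Int.cast_sub, hbez, Int.cast_one,
    one_mul]

/-- A weak form of Hermite's bound `γ₂ = √(4/3)`: for a shortest `w` completed to a basis
`w, z'` with `z'` Gauss-reduced, `‖w‖⁴ ≤ ‖w‖² ‖z'‖² = 1 + ⟪w, z'⟫² ≤ 1 + ‖w‖⁴ / 4`. -/
lemma exists_l2normAt_le_two (huv : |cross u v| = 1) (t : ℝ) :
    ∃ w ∈ lat u v, w ≠ 0 ∧ l2normAt t w ≤ 2 := by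
  obtain ⟨w, hw, hw0, hmin⟩ := exists_isShortestAt huv t
  obtain ⟨a, b, rfl⟩ := hw
  obtain ⟨z, hz, hwz⟩ := exists_mem_lat_cross_eq (u := u) (v := v) (hmin.gcd_eq_one hw0)
  obtain ⟨k, hk⟩ := exists_abs_innerAt_sub_zsmul_le t hw0 z
  set w := a • u + b • v
  set z' := z - k • w
  have hz' : z' ∈ lat u v := sub_zsmul_mem_lat ⟨a, b, rfl⟩ hz k
  have hcross : cross w z' ^ 2 = 1 := by
    rw [cross_sub_zsmul, hwz, ← sq_abs, huv, one_pow]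
  have hz'0 : z' ≠ 0 := by rintro h; simp [h, cross] at hcross
  have hlag := cross_sq_add_innerAt_sq t w z'
  have hwz' : l2normAt t w ≤ l2normAt t z' := hmin z' hz' hz'0
  have hpos := l2normAt_pos t hw0
  refine ⟨w, ⟨a, b, rfl⟩, hw0, ?_⟩
  have hI : innerAt t w z' ^ 2 ≤ (l2normAt t w ^ 2 / 2) ^ 2 := by
    rw [← sq_abs]
    exact pow_le_pow_left₀ (abs_nonneg _) hk 2
  have hs : l2normAt t w ^ 2 * l2normAt t w ^ 2 ≤ l2normAt t w ^ 2 * l2normAt t z' ^ 2 := by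
    gcongr
  have hs2 : l2normAt t w ^ 2 ≤ 2 ^ 2 := by nlinarith
  exact (sq_le_sq₀ hpos.le zero_le_two).1 hs2

lemma l2sys_le_l2normAt {t : ℝ} {p : ℝ × ℝ} (hp : p ∈ lat u v) (hp0 : p ≠ 0) :
    l2sys u v t ≤ l2normAt t p := by
  refine csInf_le ⟨0, ?_⟩ ⟨p, hp, hp0, rfl⟩
  rintro _ ⟨q, -, -, rfl⟩
  exact l2normAt_nonneg t q

lemma IsShortestAt.l2normAt_eq_l2sys {t : ℝ} {A : ℝ × ℝ} (h : IsShortestAt u v t A)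
    (hA : A ∈ lat u v) (hA0 : A ≠ 0) : l2normAt t A = l2sys u v t := by
  have hleast : IsLeast {r | ∃ p ∈ lat u v, p ≠ 0 ∧ r = l2normAt t p} (l2normAt t A) := by
    refine ⟨⟨A, hA, hA0, rfl⟩, ?_⟩
    rintro _ ⟨p, hp, hp0, rfl⟩
    exact h p hp hp0
  exact hleast.csInf_eq.symm

lemma bddAbove_range_l2sys (huv : |cross u v| = 1) : BddAbove (Set.range (l2sys u v)) := by
  refine ⟨2, ?_⟩
  rintro _ ⟨t, rfl⟩
  obtain ⟨w, hw, hw0, hw2⟩ := exists_l2normAt_le_two huv t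
  exact (l2sys_le_l2normAt hw hw0).trans hw2

end systole

section flow

variable {u v A : ℝ × ℝ}

/-- A parallel `q` is `c • A` with `|c| ≥ 1` by minimality at time `0`, and `g_t` scales both
alike. -/
lemma IsShortestAt.l2normAt_le_of_cross_eq_zero (hmin : IsShortestAt u v 0 A) (hA0 : A ≠ 0)
    {q : ℝ × ℝ} (hq : q ∈ lat u v) (hq0 : q ≠ 0) (h : cross A q = 0) (t : ℝ) :
    l2normAt t A ≤ l2normAt t q := by
  obtain ⟨c, rfl⟩ := exists_eq_smul_of_cross_eq_zero hA0 h
  have h0 := hmin _ hq hq0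
  rw [l2normAt_smul] at h0 ⊢
  have hc : 1 ≤ |c| := by nlinarith [l2normAt_pos 0 hA0]
  nlinarith [l2normAt_nonneg t A]

/-- For `|t| ≤ c`, a vector longer than `e^{2c} ‖A‖` at time `0` is still longer than `A` at
time `t`, so only finitely many vectors can compete with `A`. -/
lemma IsShortestAt.of_forall_cross_ne_zero (hmin : IsShortestAt u v 0 A) (hA0 : A ≠ 0)
    {c t : ℝ} (ht : |t| ≤ c)
    (h : ∀ q ∈ lat u v, cross A q ≠ 0 → l2normAt 0 q ≤ exp c * exp c * l2normAt 0 A →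
      l2normAt t A ≤ l2normAt t q) :
    IsShortestAt u v t A := by
  intro q hq hq0
  by_cases hpar : cross A q = 0
  · exact hmin.l2normAt_le_of_cross_eq_zero hA0 hq hq0 hpar t
  by_cases hshort : l2normAt 0 q ≤ exp c * exp c * l2normAt 0 A
  · exact h q hq hpar hshort
  have hA : l2normAt t A ≤ exp c * l2normAt 0 A := by
    refine (l2normAt_le_exp_abs_sub_mul t 0 A).trans ?_
    rw [sub_zero]
    gcongr
    exact l2normAt_nonneg _ _
  have hq' : l2normAt 0 q ≤ exp c * l2normAt t q := by
    refine (l2normAt_le_exp_abs_sub_mul 0 t q).trans ?_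
    rw [zero_sub, abs_neg]
    gcongr
    exact l2normAt_nonneg _ _
  refine le_of_mul_le_mul_left ?_ (exp_pos c)
  nlinarith [exp_pos c]

/-- Intermediate value theorem for the gap between `A` and its shortest nonparallel
competitor, which is `≥ 0` at time `0` and negative once the systole bound `≤ 2` forces some
nonparallel vector to beat `A`. -/
lemma exists_nonparallel_tie (huv : |cross u v| = 1) (hA0 : A ≠ 0) (hmin : IsShortestAt u v 0 A) :
    ∃ t₀ B, B ∈ lat u v ∧ cross A B ≠ 0 ∧ l2normAt t₀ A = l2normAt t₀ B ∧
      IsShortestAt u v t₀ A := by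
  obtain ⟨T, hT⟩ := exists_lt_l2normAt hA0 2
  obtain ⟨w, hw, hw0, hw2⟩ := exists_l2normAt_le_two huv T
  have hAw : cross A w ≠ 0 := fun h ↦
    (hmin.l2normAt_le_of_cross_eq_zero hA0 hw hw0 h T).not_gt (by linarith)
  set R := exp |T| * exp |T| * l2normAt 0 A
  have hQ : {q | q ∈ lat u v ∧ cross A q ≠ 0 ∧ l2normAt 0 q ≤ R}.Finite :=
    (finite_setOf_mem_lat_l2normAt_zero_le huv R).subset fun q hq ↦ ⟨hq.1, hq.2.2⟩
  set Q := hQ.toFinset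
  have hwQ : w ∈ Q := by
    refine hQ.mem_toFinset.2 ⟨hw, hAw, ?_⟩
    calc l2normAt 0 w ≤ exp |T| * l2normAt T w := by
          simpa using l2normAt_le_exp_abs_sub_mul 0 T w
      _ ≤ exp |T| * l2normAt T A := by gcongr; linarith
      _ ≤ R := by
          rw [show R = exp |T| * (exp |T| * l2normAt 0 A) from mul_assoc _ _ _]
          gcongr
          simpa using l2normAt_le_exp_abs_sub_mul T 0 A
  set F : ℝ → ℝ := fun t ↦ Q.inf' ⟨w, hwQ⟩ (fun q ↦ l2normAt t q) - l2normAt t A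
  have hF : Continuous F :=
    (Continuous.finset_inf'_apply _ fun q _ ↦ continuous_l2normAt q).sub (continuous_l2normAt A)
  have hF0 : 0 ≤ F 0 := by
    refine sub_nonneg.2 (Finset.le_inf' _ _ fun q hq ↦ ?_)
    obtain ⟨hq, hAq, -⟩ := hQ.mem_toFinset.1 hq
    exact hmin q hq (ne_zero_of_cross_ne_zero hAq)
  have hFT : F T ≤ 0 := sub_nonpos.2 ((Q.inf'_le _ hwQ).trans (by linarith))
  obtain ⟨t₀, ht₀, hFt₀⟩ :=
    intermediate_value_uIcc hF.continuousOn (Set.mem_uIcc.2 (.inr ⟨hFT, hF0⟩))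
  obtain ⟨B, hBQ, hB⟩ := Q.exists_mem_eq_inf' ⟨w, hwQ⟩ (fun q ↦ l2normAt t₀ q)
  obtain ⟨hBlat, hAB, -⟩ := hQ.mem_toFinset.1 hBQ
  have hinf : Q.inf' ⟨w, hwQ⟩ (fun q ↦ l2normAt t₀ q) = l2normAt t₀ A := sub_eq_zero.1 hFt₀
  refine ⟨t₀, B, hBlat, hAB, by rw [← hinf, hB], hmin.of_forall_cross_ne_zero hA0 (c := |T|)
    (by simpa using Set.abs_sub_left_of_mem_uIcc ht₀) fun q hq hAq hqR ↦ ?_⟩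
  exact hinf ▸ Q.inf'_le _ (hQ.mem_toFinset.2 ⟨hq, hAq, hqR⟩)

lemma one_le_l2normAt_of_eq (huv : |cross u v| = 1) {B : ℝ × ℝ} {t : ℝ} (hA : A ∈ lat u v)
    (hB : B ∈ lat u v) (hAB : cross A B ≠ 0) (h : l2normAt t A = l2normAt t B) :
    1 ≤ l2normAt t A := by
  have := (one_le_abs_cross huv hA hB hAB).trans (abs_cross_le t A B)
  rw [← h] at this
  nlinarith [l2normAt_nonneg t A]

lemma exists_tie_one_le_l2sys (huv : |cross u v| = 1) (hA : A ∈ lat u v) (hA0 : A ≠ 0)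
    (hmin : IsShortestAt u v 0 A) :
    ∃ (t₀ : ℝ) (B : ℝ × ℝ), B ∈ lat u v ∧ B ≠ 0 ∧ cross A B ≠ 0 ∧
      l2normAt t₀ A = l2normAt t₀ B ∧ l2normAt t₀ A = l2sys u v t₀ ∧ 1 ≤ l2sys u v t₀ := by
  obtain ⟨t₀, B, hB, hAB, heq, hshort⟩ := exists_nonparallel_tie huv hA0 hmin
  have hsys := hshort.l2normAt_eq_l2sys hA hA0
  exact ⟨t₀, B, hB, ne_zero_of_cross_ne_zero hAB, hAB, heq, hsys,
    hsys ▸ one_le_l2normAt_of_eq huv hA hB hAB heq⟩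

end flow

lemma one_le_iSup_l2sys {u v : ℝ × ℝ} (huv : |cross u v| = 1) : 1 ≤ ⨆ t, l2sys u v t := by
  obtain ⟨A, hA, hA0, hmin⟩ := exists_isShortestAt huv 0
  obtain ⟨t₀, -, -, -, -, -, -, h⟩ := exists_tie_one_le_l2sys huv hA hA0 hmin
  exact le_ciSup_of_le (bddAbove_range_l2sys huv) t₀ h

lemma iSup_l2sys_one_zero_zero_one : (⨆ t, l2sys ((1 : ℝ), (0 : ℝ)) ((0 : ℝ), (1 : ℝ)) t) = 1 := by
  refine le_antisymm (ciSup_le fun t ↦ ?_) (one_le_iSup_l2sys (by norm_num [cross]))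
  rcases le_total 0 t with ht | ht
  · refine (l2sys_le_l2normAt (p := (0, 1)) ⟨0, 1, by simp⟩ (by simp)).trans ?_
    simpa [l2normAt, sqrt_sq (exp_pos _).le] using ht
  · refine (l2sys_le_l2normAt (p := (1, 0)) ⟨1, 0, by simp⟩ (by simp)).trans ?_
    simpa [l2normAt, sqrt_sq (exp_pos _).le] using ht

/-- If `A` attains the minimal ℓ² norm among nonzero points of a unimodular
lattice, then at some time `t₀` the diagonal flow produces a second,
non-parallel minimal vector `B` with `‖g_{t₀}A‖₂ = ‖g_{t₀}B‖₂` equal to the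
systole at `t₀`, and this common value is at least `1`. Consequently
`sup_t min_{0 ≠ P} ‖g_t P‖₂ ≥ 1`, with equality for `Λ = ℤ²`. -/
theorem l2_systole_sup_ge_one (u v A : ℝ × ℝ)
    (huv : |u.1 * v.2 - u.2 * v.1| = 1)
    (hA : A ∈ lat u v) (hA0 : A ≠ 0)
    (hmin : ∀ p ∈ lat u v, p ≠ 0 → l2normAt 0 A ≤ l2normAt 0 p) :
    (∃ (t₀ : ℝ) (B : ℝ × ℝ), B ∈ lat u v ∧ B ≠ 0 ∧
      A.1 * B.2 - A.2 * B.1 ≠ 0 ∧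
      l2normAt t₀ A = l2normAt t₀ B ∧
      l2normAt t₀ A = l2sys u v t₀ ∧
      1 ≤ l2sys u v t₀) ∧
    (1 ≤ ⨆ t : ℝ, l2sys u v t) ∧
    (⨆ t : ℝ, l2sys ((1 : ℝ), (0 : ℝ)) ((0 : ℝ), (1 : ℝ)) t) = 1 :=
  ⟨exists_tie_one_le_l2sys huv hA hA0 hmin, one_le_iSup_l2sys huv, iSup_l2sys_one_zero_zero_one⟩
end
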